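/- For every configuration ω ∈ Ω, every site z ∈ ℤ₊² and every site z' lying on the low-optimal path γ_z^ω, the initial segment of γ_z^ω from (0,0) to z' is equal to the low-optimal path γ_{z'}^ω. -/

import Mathlib

/-!
Split `γ_z = α ++ β` with `α` ending at `z'`. Any path `δ` to `z'` yields the path `δ ++ β`
to `z`, of length `ω(δ) + ω(β)`; optimality of `α ++ β` therefore makes `α` optimal, and for
optimal `δ` makes `δ ++ β` optimal, so `α ++ β` lies below it and `α` lies below `δ`.
The low-optimal path is unique since the `i`-th site of any path lies on the antidiagonal
`x + y = i`, so mutual "below" forces equality.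
-/

open scoped NNReal

/-- A site of the lattice `ℤ²`. -/
abbrev Site : Type := ℤ × ℤ

/-- The positive quadrant `ℤ₊²`. -/
def posQuad : Set Site := {z : Site | 0 ≤ z.1 ∧ 0 ≤ z.2}

/-- An admissible (up-right) step. -/
def IsStep (u v : Site) : Prop := v = u + (1, 0) ∨ v = u + (0, 1)

/-- `γ` is an up-right path from `(0,0)` to `z`, i.e. `γ ∈ Γ_z`. -/
def IsPathTo (z : Site) (γ : List Site) : Prop :=
  γ.head? = some ((0, 0) : Site) ∧ γ.getLast? = some z ∧ γ.Chain' IsStep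

/-- The length `ω(γ) = Σ_{z ∈ γ} ω(z)` of a path `γ` under the configuration `ω`. -/
noncomputable def plen (ω : Site → ℝ) (γ : List Site) : ℝ := (γ.map ω).sum

/-- `γ ∈ Γ_z` is `ω`-optimal if its length is maximal over `Γ_z`. -/
def IsOptimal (ω : Site → ℝ) (z : Site) (γ : List Site) : Prop :=
  IsPathTo z γ ∧ ∀ γ' : List Site, IsPathTo z γ' → plen ω γ' ≤ plen ω γ

/-- `γ` is below `γ'`: at every step index, the second coordinate of the site of `γ`
is at most that of the corresponding site of `γ'`. -/
def Below (γ γ' : List Site) : Prop :=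
  ∀ (i : ℕ) (h : i < γ.length) (h' : i < γ'.length),
    (γ.get ⟨i, h⟩).2 ≤ (γ'.get ⟨i, h'⟩).2

/-- `γ` is the low-optimal path of `Γ_z`: it is `ω`-optimal and below every
`ω`-optimal path of `Γ_z`. -/
def IsLowOptimal (ω : Site → ℝ) (z : Site) (γ : List Site) : Prop :=
  IsOptimal ω z γ ∧ ∀ γ' : List Site, IsOptimal ω z γ' → Below γ γ'

open Classical in
/-- The low-optimal path `γ_z^ω` (an arbitrary default when it does not exist). -/
noncomputable def lowOpt (ω : Site → ℝ) (z : Site) : List Site :=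
  if h : ∃ γ : List Site, IsLowOptimal ω z γ then h.choose else []

/-- The vertex set `V(T_z^ω) = {z' ∈ ℤ₊² : z ∈ γ_{z'}^ω}` of the subtree rooted at `z`. -/
def treeV (ω : Site → ℝ) (z : Site) : Set Site :=
  {z' : Site | z' ∈ posQuad ∧ z ∈ lowOpt ω z'}

lemma plen_append (ω : Site → ℝ) (α β : List Site) :
    plen ω (α ++ β) = plen ω α + plen ω β := by
  simp [plen]

lemma Below.of_append {α β δ ε : List Site} (h : Below (α ++ β) (δ ++ ε)) : Below α δ := by
  intro i hα hδ
  simpa [List.getElem_append_left hα, List.getElem_append_left hδ] using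
    h i (by simp; omega) (by simp; omega)

namespace IsPathTo

variable {z : Site} {γ : List Site}

lemma ne_nil (h : IsPathTo z γ) : γ ≠ [] := by
  rintro rfl
  simp [IsPathTo] at h

lemma fst_add_snd_getElem (h : IsPathTo z γ) :
    ∀ i (hi : i < γ.length), γ[i].1 + γ[i].2 = i := by
  intro i
  induction i with
  | zero =>
    intro hi
    obtain ⟨a, l, rfl⟩ := List.exists_cons_of_ne_nil h.ne_nil
    simp_all [IsPathTo]
  | succ n ih =>
    intro hi
    have hstep : IsStep γ[n] γ[n + 1] := List.isChain_iff_getElem.mp h.2.2 n hi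
    have hn := ih (by omega)
    rcases hstep with hs | hs <;> rw [hs] <;> simp <;> omega

lemma getLast_eq (h : IsPathTo z γ) : γ.getLast h.ne_nil = z :=
  Option.some_injective _ (List.getLast?_eq_some_getLast h.ne_nil ▸ h.2.1)

lemma length_eq (h : IsPathTo z γ) : (γ.length : ℤ) = z.1 + z.2 + 1 := by
  have hlen := List.length_pos_iff.mpr h.ne_nil
  have hsum := h.fst_add_snd_getElem (γ.length - 1) (by omega)
  rw [← List.getLast_eq_getElem h.ne_nil, h.getLast_eq] at hsum
  omega

lemma take (h : IsPathTo z γ) {i : ℕ} (hi : i < γ.length) :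
    IsPathTo γ[i] (γ.take (i + 1)) := by
  refine ⟨?_, ?_, h.2.2.take _⟩
  · simpa [List.head?_take] using h.1
  · simp [List.getLast?_take, List.getElem?_eq_getElem hi]

lemma replace_prefix {z' : Site} {α β δ : List Site} (h : IsPathTo z (α ++ β))
    (hα : IsPathTo z' α) (hδ : IsPathTo z' δ) : IsPathTo z (δ ++ β) := by
  obtain ⟨hhead, hlast, hchain⟩ := h
  refine ⟨?_, ?_, ?_⟩
  · rw [List.head?_append, hδ.1]
    rfl
  · rwa [List.getLast?_append, hδ.2.1, ← hα.2.1, ← List.getLast?_append]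
  · have hjoin := (List.isChain_append.mp hchain).2
    rw [hα.2.1, ← hδ.2.1] at hjoin
    exact List.isChain_append.mpr ⟨hδ.2.2, hjoin⟩

end IsPathTo

section Optimality

variable {ω : Site → ℝ} {z z' : Site} {α β : List Site}

lemma IsOptimal.of_append (h : IsOptimal ω z (α ++ β)) (hα : IsPathTo z' α) :
    IsOptimal ω z' α := by
  refine ⟨hα, fun δ hδ => ?_⟩
  have := h.2 _ (h.1.replace_prefix hα hδ)
  rw [plen_append, plen_append] at this
  linarith

lemma IsOptimal.replace_prefix {δ : List Site} (h : IsOptimal ω z (α ++ β))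
    (hα : IsPathTo z' α) (hδ : IsOptimal ω z' δ) : IsOptimal ω z (δ ++ β) := by
  refine ⟨h.1.replace_prefix hα hδ.1, fun σ hσ => ?_⟩
  have hσle := h.2 σ hσ
  have hαle := hδ.2 α hα
  rw [plen_append] at hσle ⊢
  linarith

lemma IsLowOptimal.of_append (h : IsLowOptimal ω z (α ++ β)) (hα : IsPathTo z' α) :
    IsLowOptimal ω z' α :=
  ⟨h.1.of_append hα, fun _ hδ => (h.2 _ (h.1.replace_prefix hα hδ)).of_append⟩

lemma IsLowOptimal.unique {γ γ' : List Site} (h : IsLowOptimal ω z γ)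
    (h' : IsLowOptimal ω z γ') : γ = γ' := by
  have hlen : γ.length = γ'.length := by
    have := h.1.1.length_eq
    have := h'.1.1.length_eq
    omega
  refine List.ext_getElem hlen fun i hi hi' => ?_
  have hsnd : γ[i].2 = γ'[i].2 := le_antisymm (h.2 γ' h'.1 i hi hi') (h'.2 γ h.1 i hi' hi)
  have hsum := h.1.1.fst_add_snd_getElem i hi
  have hsum' := h'.1.1.fst_add_snd_getElem i hi'
  exact Prod.ext (by omega) hsnd

lemma lowOpt_eq {γ : List Site} (h : IsLowOptimal ω z γ) : lowOpt ω z = γ := by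
  have hex : ∃ γ, IsLowOptimal ω z γ := ⟨γ, h⟩
  rw [lowOpt, dif_pos hex]
  exact hex.choose_spec.unique h

lemma isLowOptimal_lowOpt (hne : lowOpt ω z ≠ []) : IsLowOptimal ω z (lowOpt ω z) := by
  by_cases hex : ∃ γ, IsLowOptimal ω z γ
  · obtain ⟨γ, hγ⟩ := hex
    rwa [lowOpt_eq hγ]
  · simp [lowOpt, dif_neg hex] at hne

end Optimality

theorem lowOpt_initial_segment_general (ω : Site → ℝ)
    (z : Site) (z' : Site) (hz' : z' ∈ lowOpt ω z) :
    ∃ (i : ℕ) (hi : i < (lowOpt ω z).length),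
      (lowOpt ω z).get ⟨i, hi⟩ = z' ∧ (lowOpt ω z).take (i + 1) = lowOpt ω z' := by
  set γ := lowOpt ω z
  have hγ : IsLowOptimal ω z γ := isLowOptimal_lowOpt (List.ne_nil_of_mem hz')
  obtain ⟨⟨i, hi⟩, rfl⟩ := List.mem_iff_get.mp hz'
  refine ⟨i, hi, rfl, (lowOpt_eq ?_).symm⟩
  have hsplit : IsLowOptimal ω z (γ.take (i + 1) ++ γ.drop (i + 1)) := by
    rwa [List.take_append_drop]
  exact hsplit.of_append (hγ.1.1.take hi)

/-- If `z'` lies on the low-optimal path `γ_z^ω`, then the initial segment of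
`γ_z^ω` from `(0,0)` to `z'` is the low-optimal path `γ_{z'}^ω`. -/
theorem lowOpt_initial_segment (ω : Site → ℝ) (hω : ∀ z : Site, 0 ≤ ω z)
    (z : Site) (hz : z ∈ posQuad) (z' : Site) (hz' : z' ∈ lowOpt ω z) :
    ∃ (i : ℕ) (hi : i < (lowOpt ω z).length),
      (lowOpt ω z).get ⟨i, hi⟩ = z' ∧ (lowOpt ω z).take (i + 1) = lowOpt ω z' :=
  lowOpt_initial_segment_general ω z z' hz'
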